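/- arXiv:1904.05227 — 6 statements merged into one kernel-verified Lean document; each statement's English description precedes it below -/
import Mathlib

section
/- Let q be a prime power and let n ≤ m be positive integers. If C ⊆ 𝔽_q^{n×m} is a non-zero 𝔽_q-linear rank-metric code with minimum distance d(C), then dim_{𝔽_q}(C) ≤ m(n − d(C) + 1). -/
/-!
Deleting any `d - 1` rows is injective on a code of minimum distance `d`: a codeword vanishing
on the remaining rows has at most `d - 1` non-zero rows, hence rank below `d`, so it is zero.
The code therefore embeds into the space of `(n - d + 1) × m` matrices.
-/

open Matrix

/-- The minimum (rank) distance of a rank-metric code: the minimum rank of a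
non-zero codeword. -/
noncomputable def minRankDist {F : Type*} [Field F] {n m : ℕ}
    (C : Submodule F (Matrix (Fin n) (Fin m) F)) : ℕ :=
  sInf {r : ℕ | ∃ M ∈ C, M ≠ 0 ∧ M.rank = r}

open Module Function

namespace Matrix

variable {m m₀ n R : Type*} [Fintype n]

theorem rank_pos_of_ne_zero [Field R] [DecidableEq n] {A : Matrix m n R} (hA : A ≠ 0) :
    0 < A.rank := by
  rw [pos_iff_ne_zero]
  contrapose! hA
  rw [rank, Submodule.finrank_eq_zero, LinearMap.range_eq_bot, ← Matrix.toLin'_apply'] at hA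
  exact Matrix.toLin'.map_eq_zero_iff.1 hA

theorem rank_le_card_sub_of_submatrix_eq_zero [CommSemiring R] [StrongRankCondition R]
    [Fintype m] [Fintype m₀] (A : Matrix m n R) {e : m₀ → m} (he : Injective e)
    (h : A.submatrix e id = 0) : A.rank ≤ Fintype.card m - Fintype.card m₀ := by
  classical
  have hsupp : support A.row ⊆ ↑(Finset.univ.image e)ᶜ := by
    intro i hi
    simp only [Finset.coe_compl, Finset.coe_image, Finset.coe_univ, Set.image_univ,
      Set.mem_compl_iff, Set.mem_range, not_exists]
    rintro j rfl
    exact hi (congrFun h j)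
  simpa [Finset.card_compl, Finset.card_image_of_injective _ he] using
    A.rank_le_card_of_support_subset _ hsupp

end Matrix

theorem finrank_le_sub_mul_of_forall_lt_rank {K : Type*} [Field K] {n m r : ℕ}
    (C : Submodule K (Matrix (Fin n) (Fin m) K)) (h : ∀ M ∈ C, M ≠ 0 → r < M.rank) :
    finrank K C ≤ (n - r) * m := by
  let deleteRows : C →ₗ[K] Matrix (Fin (n - r)) (Fin m) K :=
    (LinearMap.funLeft K (Fin m → K) (Fin.castLE (Nat.sub_le n r))).comp C.subtype
  have hinj : Injective deleteRows := by
    rw [← LinearMap.ker_eq_bot, LinearMap.ker_eq_bot']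
    intro M hM
    by_contra hM0
    have hlt := h M M.2 (by simpa using hM0)
    have hle := (M : Matrix (Fin n) (Fin m) K).rank_le_card_sub_of_submatrix_eq_zero
      (Fin.castLE_injective _) hM
    simp only [Fintype.card_fin] at hle
    omega
  calc finrank K C ≤ finrank K (Matrix (Fin (n - r)) (Fin m) K) :=
        LinearMap.finrank_le_finrank_of_injective hinj
    _ = (n - r) * m := by simp [finrank_matrix]

theorem minRankDist_le_rank {F : Type*} [Field F] {n m : ℕ}
    {C : Submodule F (Matrix (Fin n) (Fin m) F)} {M : Matrix (Fin n) (Fin m) F} (hM : M ∈ C)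
    (hM0 : M ≠ 0) : minRankDist C ≤ M.rank :=
  Nat.sInf_le ⟨M, hM, hM0, rfl⟩

theorem singleton_bound_rank_metric_general {F : Type*} [Field F] {n m : ℕ}
    (C : Submodule F (Matrix (Fin n) (Fin m) F)) :
    Module.finrank F C ≤ m * (n - minRankDist C + 1) := by
  have hlt : ∀ M ∈ C, M ≠ 0 → minRankDist C - 1 < M.rank := fun M hM hM0 => by
    have := minRankDist_le_rank hM hM0
    have := rank_pos_of_ne_zero hM0
    omega
  calc Module.finrank F C ≤ (n - (minRankDist C - 1)) * m :=
        finrank_le_sub_mul_of_forall_lt_rank C hlt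
    _ ≤ m * (n - minRankDist C + 1) := by
        rw [mul_comm]
        gcongr
        omega

/-- Singleton-like bound for rank-metric codes (Delsarte): if `C ⊆ 𝔽_q^{n×m}` is a
non-zero rank-metric code with `n ≤ m`, then `dim C ≤ m (n - d(C) + 1)`. -/
theorem singleton_bound_rank_metric {F : Type*} [Field F] [Fintype F] {n m : ℕ}
    (hn : 0 < n) (hnm : n ≤ m) (C : Submodule F (Matrix (Fin n) (Fin m) F))
    (hC : C ≠ ⊥) :
    Module.finrank F C ≤ m * (n - minRankDist C + 1) :=
  singleton_bound_rank_metric_general C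
end

section
/- Let q be a prime power and let X_1, X_2 ∈ 𝔽_q^{k×n×m} be two generator tensors of the same rank-metric code C ⊆ 𝔽_q^{n×m} of dimension k (that is, ss_1(X_1) = ss_1(X_2) = C). Then trk(X_1) = trk(X_2). Moreover, if C ≠ {0}, this common value equals the minimum integer R > 0 such that C is contained in the 𝔽_q-span of R matrices of rank one. -/
open Matrix

/-- The tensor rank of a 3-tensor `X ∈ F^{k×n×m}`. -/
noncomputable def tensorRank {F : Type*} [Field F] {k n m : ℕ}
    (X : Fin k → Fin n → Fin m → F) : ℕ :=
  sInf {R : ℕ | ∃ (u : Fin R → Fin k → F) (v : Fin R → Fin n → F) (w : Fin R → Fin m → F),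
    ∀ i j l, X i j l = ∑ r, u r i * v r j * w r l}

/-- The first slice space of a 3-tensor `X ∈ F^{k×n×m}`. -/
def sliceSpace1 {F : Type*} [Field F] {k n m : ℕ} (X : Fin k → Fin n → Fin m → F) :
    Submodule F (Matrix (Fin n) (Fin m) F) :=
  Submodule.span F (Set.range fun i => Matrix.of (X i))

/-!
A decomposition `X = ∑ r, u r ⊗ v r ⊗ w r` is the same thing as writing every slice `X i` as the
combination `∑ r, u r i • vecMulVec (v r) (w r)` of outer products. Hence `tensorRank X` is the least
number of outer products whose span contains `ss₁(X)`, and depends on `X` only through `ss₁(X)`.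
Nonzero outer products are exactly the rank-one matrices; when `C ≠ 0` at least one of the outer
products is nonzero, and the zero ones can be replaced by it without shrinking the span.
-/

namespace Matrix

variable {K m n : Type*} [Field K] [Fintype n]

theorem rank_eq_zero_iff {A : Matrix m n K} : A.rank = 0 ↔ A = 0 := by
  rw [rank, Submodule.finrank_eq_zero, LinearMap.range_eq_bot]
  constructor
  · intro h
    ext i j
    classical
    simpa using congrFun (LinearMap.congr_fun h (Pi.single j 1)) i
  · rintro rfl
    exact mulVecLin_zero

theorem rank_vecMulVec_eq_one {v : m → K} {w : n → K} (h : vecMulVec v w ≠ 0) :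
    (vecMulVec v w).rank = 1 :=
  le_antisymm (rank_vecMulVec_le v w) (Nat.one_le_iff_ne_zero.mpr (rank_eq_zero_iff.not.mpr h))

theorem exists_eq_vecMulVec_of_rank_eq_one {A : Matrix m n K} (h : A.rank = 1) :
    ∃ (v : m → K) (w : n → K), A = vecMulVec v w := by
  rw [rank_eq_finrank_span_cols, finrank_eq_one_iff'] at h
  obtain ⟨v, -, hv⟩ := h
  choose c hc using fun l => hv ⟨Aᵀ l, Submodule.subset_span (Set.mem_range_self l)⟩
  refine ⟨v, c, ?_⟩
  ext j l
  simpa [vecMulVec_apply, mul_comm] using (congrFun (congrArg Subtype.val (hc l)) j).symm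

end Matrix

section GeneratorTensor

variable {F : Type*} [Field F] {k n m : ℕ}

noncomputable def outerSpanRank (C : Submodule F (Matrix (Fin n) (Fin m) F)) : ℕ :=
  sInf {R : ℕ | ∃ (v : Fin R → Fin n → F) (w : Fin R → Fin m → F),
    C ≤ Submodule.span F (Set.range fun r => vecMulVec (v r) (w r))}

theorem exists_decomposition_iff_sliceSpace1_le (X : Fin k → Fin n → Fin m → F) {R : ℕ}
    (v : Fin R → Fin n → F) (w : Fin R → Fin m → F) :
    (∃ u : Fin R → Fin k → F, ∀ i j l, X i j l = ∑ r, u r i * v r j * w r l) ↔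
      sliceSpace1 X ≤ Submodule.span F (Set.range fun r => vecMulVec (v r) (w r)) := by
  have slice_eq (i : Fin k) (c : Fin R → F) :
      (∀ j l, X i j l = ∑ r, c r * v r j * w r l) ↔
        ∑ r, c r • vecMulVec (v r) (w r) = Matrix.of (X i) := by
    simp only [← Matrix.ext_iff, Matrix.sum_apply, Matrix.smul_apply, vecMulVec_apply,
      smul_eq_mul, of_apply, mul_assoc, eq_comm]
  simp only [sliceSpace1, Submodule.span_le, Set.range_subset_iff, SetLike.mem_coe,
    Submodule.mem_span_range_iff_exists_fun, ← slice_eq]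
  constructor
  · rintro ⟨u, hu⟩ i
    exact ⟨fun r => u r i, hu i⟩
  · intro h
    choose c hc using h
    exact ⟨fun r i => c i r, hc⟩

theorem tensorRank_eq_outerSpanRank (X : Fin k → Fin n → Fin m → F) :
    tensorRank X = outerSpanRank (sliceSpace1 X) := by
  unfold tensorRank outerSpanRank
  congr 1
  ext R
  simp only [Set.mem_ofPred_eq, ← exists_decomposition_iff_sliceSpace1_le]
  exact ⟨fun ⟨u, v, w, h⟩ => ⟨v, w, u, h⟩, fun ⟨v, w, u, h⟩ => ⟨u, v, w, h⟩⟩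

theorem outerSpanRank_eq_sInf_rank_eq_one {C : Submodule F (Matrix (Fin n) (Fin m) F)}
    (hC : C ≠ ⊥) :
    outerSpanRank C = sInf {R : ℕ | 0 < R ∧
      ∃ A : Fin R → Matrix (Fin n) (Fin m) F, (∀ r, (A r).rank = 1) ∧
        C ≤ Submodule.span F (Set.range A)} := by
  unfold outerSpanRank
  congr 1
  ext R
  simp only [Set.mem_ofPred_eq]
  constructor
  · classical
    rintro ⟨v, w, hC_le⟩
    set B := fun r => vecMulVec (v r) (w r)
    obtain ⟨r₀, hr₀⟩ : ∃ r, B r ≠ 0 := by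
      by_contra! hB
      refine hC (eq_bot_iff.mpr (hC_le.trans_eq (Submodule.span_eq_bot.mpr ?_)))
      rintro _ ⟨r, rfl⟩
      exact hB r
    let A r := if B r = 0 then B r₀ else B r
    refine ⟨Fin.pos_iff_nonempty.mpr ⟨r₀⟩, A, fun r => ?_, hC_le.trans (Submodule.span_le.mpr ?_)⟩
    · unfold A
      split_ifs with h
      exacts [rank_vecMulVec_eq_one hr₀, rank_vecMulVec_eq_one h]
    · rintro _ ⟨r, rfl⟩
      by_cases h : B r = 0
      · simp [h]
      · exact Submodule.subset_span ⟨r, if_neg h⟩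
  · rintro ⟨-, A, hA, hC_le⟩
    choose v w hvw using fun r => exists_eq_vecMulVec_of_rank_eq_one (hA r)
    exact ⟨v, w, by simpa only [← hvw] using hC_le⟩

end GeneratorTensor

theorem tensorRank_generator_tensors_general {F : Type*} [Field F] {k n m : ℕ}
    (C : Submodule F (Matrix (Fin n) (Fin m) F))
    (X₁ X₂ : Fin k → Fin n → Fin m → F)
    (h₁ : sliceSpace1 X₁ = C) (h₂ : sliceSpace1 X₂ = C) :
    tensorRank X₁ = tensorRank X₂ ∧
    (C ≠ ⊥ → tensorRank X₁ = sInf {R : ℕ | 0 < R ∧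
      ∃ A : Fin R → Matrix (Fin n) (Fin m) F, (∀ r, (A r).rank = 1) ∧
        C ≤ Submodule.span F (Set.range A)}) := by
  rw [tensorRank_eq_outerSpanRank, tensorRank_eq_outerSpanRank, h₁, h₂]
  exact ⟨rfl, outerSpanRank_eq_sInf_rank_eq_one⟩

/-- Any two generator tensors of a rank-metric code `C` have the same tensor rank;
if `C ≠ 0`, this common value is the least `R > 0` such that `C` is contained in the
span of `R` rank-one matrices. -/
theorem tensorRank_generator_tensors {F : Type*} [Field F] [Fintype F] {k n m : ℕ}
    (C : Submodule F (Matrix (Fin n) (Fin m) F))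
    (hk : Module.finrank F C = k)
    (X₁ X₂ : Fin k → Fin n → Fin m → F)
    (h₁ : sliceSpace1 X₁ = C) (h₂ : sliceSpace1 X₂ = C) :
    tensorRank X₁ = tensorRank X₂ ∧
    (C ≠ ⊥ → tensorRank X₁ = sInf {R : ℕ | 0 < R ∧
      ∃ A : Fin R → Matrix (Fin n) (Fin m) F, (∀ r, (A r).rank = 1) ∧
        C ≤ Submodule.span F (Set.range A)}) :=
  tensorRank_generator_tensors_general C X₁ X₂ h₁ h₂
end

section
/- Let q be a prime power, let d ≤ n, m < R be positive integers, let C ⊆ 𝔽_q^R be a non-zero linear code, and let V ∈ 𝔽_q^{n×R}, W ∈ 𝔽_q^{m×R}. The following are equivalent: (1) rank(V · diag(c) · Wᵀ) ≥ d for every non-zero c ∈ C; (2) dim(C_V ∩ C_{W_c}^⊥) ≤ rank(V) − d for every non-zero c ∈ C; (3) dim(C_W ∩ C_{V_c}^⊥) ≤ rank(W) − d for every non-zero c ∈ C. Here C_V, C_W are the row spaces of V, W, and C_{W_c}, C_{V_c} are the row spaces of W·diag(c), V·diag(c). -/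
open Matrix

/-- The row space of a matrix: the span of its rows. -/
def rowSpace {F : Type*} [Field F] {n R : ℕ} (V : Matrix (Fin n) (Fin R) F) :
    Submodule F (Fin R → F) :=
  Submodule.span F (Set.range V)

/-- The orthogonal complement of a subspace of `F^R` with respect to the standard
dot product. -/
def dotPerp {F : Type*} [Field F] {R : ℕ} (U : Submodule F (Fin R → F)) :
    Submodule F (Fin R → F) where
  carrier := {x | ∀ u ∈ U, x ⬝ᵥ u = 0}
  zero_mem' := fun u _ => by simp
  add_mem' := fun {x y} hx hy u hu => by
    simp [add_dotProduct, hx u hu, hy u hu]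
  smul_mem' := fun c x hx u hu => by
    simp [smul_dotProduct, hx u hu]

/-!
Right multiplication by `Nᵀ` maps the row space of `V` onto the row space of `V Nᵀ`, and its
kernel is the dot-product orthogonal of the row space of `N`. Rank–nullity on the row space of
`V` therefore gives `rank (V Nᵀ) + dim (C_V ∩ C_N^⊥) = rank V`. With `N = W diag(c)` this
turns (1) into (2); since `(V diag(c) Wᵀ)ᵀ = W diag(c) Vᵀ`, the same identity with `V` and `W`
exchanged turns (1) into (3).
-/

theorem Submodule.finrank_map_add_finrank_inf_ker {K V V₂ : Type*} [DivisionRing K]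
    [AddCommGroup V] [Module K V] [AddCommGroup V₂] [Module K V₂] [FiniteDimensional K V]
    (f : V →ₗ[K] V₂) (p : Submodule K V) :
    Module.finrank K (p.map f) + Module.finrank K ↥(p ⊓ LinearMap.ker f) =
      Module.finrank K p := by
  rw [← (f.domRestrict p).finrank_range_add_finrank_ker, LinearMap.range_domRestrict,
    LinearMap.ker_domRestrict, ← Submodule.finrank_map_subtype_eq, Submodule.map_comap_subtype]

section

variable {F : Type*} [Field F] {n m R : ℕ}

theorem rowSpace_mul (V : Matrix (Fin n) (Fin R) F) (M : Matrix (Fin R) (Fin m) F) :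
    rowSpace (V * M) = (rowSpace V).map M.vecMulLinear := by
  rw [rowSpace, rowSpace, Submodule.map_span]
  congr 1
  exact Set.range_comp M.vecMulLinear V

theorem dotPerp_rowSpace_eq_ker (N : Matrix (Fin m) (Fin R) F) :
    dotPerp (rowSpace N) = LinearMap.ker Nᵀ.vecMulLinear := by
  ext x
  change Submodule.span F (Set.range N) ≤ LinearMap.ker (dotProductBilin F F x) ↔ x ᵥ* Nᵀ = 0
  rw [Submodule.span_le, vecMul_transpose]
  exact Set.range_subset_iff.trans (by simp [funext_iff, mulVec, dotProduct_comm])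

theorem rank_mul_transpose_add_finrank_inf_dotPerp (V : Matrix (Fin n) (Fin R) F)
    (N : Matrix (Fin m) (Fin R) F) :
    (V * Nᵀ).rank + Module.finrank F ↥(rowSpace V ⊓ dotPerp (rowSpace N)) = V.rank := by
  have h := Submodule.finrank_map_add_finrank_inf_ker Nᵀ.vecMulLinear (rowSpace V)
  rw [← rowSpace_mul, ← dotPerp_rowSpace_eq_ker] at h
  rwa [rank_eq_finrank_span_row, rank_eq_finrank_span_row V]
theorem rank_mul_diagonal_mul_transpose_add_finrank_inf_dotPerp
    (V : Matrix (Fin n) (Fin R) F) (W : Matrix (Fin m) (Fin R) F) (c : Fin R → F) :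
    (V * diagonal c * Wᵀ).rank +
      Module.finrank F ↥(rowSpace V ⊓ dotPerp (rowSpace (W * diagonal c))) = V.rank := by
  have h := rank_mul_transpose_add_finrank_inf_dotPerp V (W * diagonal c)
  rwa [transpose_mul, diagonal_transpose, ← Matrix.mul_assoc] at h

theorem rank_mul_diagonal_mul_transpose_comm (V : Matrix (Fin n) (Fin R) F)
    (W : Matrix (Fin m) (Fin R) F) (c : Fin R → F) :
    (W * diagonal c * Vᵀ).rank = (V * diagonal c * Wᵀ).rank := by
  rw [← rank_transpose, transpose_mul, transpose_mul, transpose_transpose, diagonal_transpose,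
    Matrix.mul_assoc]

end

theorem extremal_triple_tfae_general {F : Type*} [Field F] {n m R d : ℕ}
    (C : Submodule F (Fin R → F))
    (V : Matrix (Fin n) (Fin R) F) (W : Matrix (Fin m) (Fin R) F) :
    List.TFAE [
      ∀ c ∈ C, c ≠ 0 → d ≤ (V * Matrix.diagonal c * Wᵀ).rank,
      ∀ c ∈ C, c ≠ 0 →
        (Module.finrank F ↥(rowSpace V ⊓ dotPerp (rowSpace (W * Matrix.diagonal c))) : ℤ)
          ≤ (V.rank : ℤ) - d,
      ∀ c ∈ C, c ≠ 0 →
        (Module.finrank F ↥(rowSpace W ⊓ dotPerp (rowSpace (V * Matrix.diagonal c))) : ℤ)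
          ≤ (W.rank : ℤ) - d] := by
  tfae_have 1 ↔ 2 := forall₃_congr fun c _ _ => by
    have := rank_mul_diagonal_mul_transpose_add_finrank_inf_dotPerp V W c
    omega
  tfae_have 1 ↔ 3 := forall₃_congr fun c _ _ => by
    have := rank_mul_diagonal_mul_transpose_add_finrank_inf_dotPerp W V c
    have := rank_mul_diagonal_mul_transpose_comm V W c
    omega
  tfae_finish

/-- Characterizations of extremality of a triple `(C, V, W)`: the rank condition
`rank(V diag(c) Wᵀ) ≥ d` for non-zero `c ∈ C` is equivalent to the two intersection
conditions. -/
theorem extremal_triple_tfae {F : Type*} [Field F] [Fintype F] {n m R d : ℕ}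
    (hd : 0 < d) (hdn : d ≤ n) (hdm : d ≤ m) (hnR : n < R) (hmR : m < R)
    (C : Submodule F (Fin R → F)) (hC : C ≠ ⊥)
    (V : Matrix (Fin n) (Fin R) F) (W : Matrix (Fin m) (Fin R) F) :
    List.TFAE [
      ∀ c ∈ C, c ≠ 0 → d ≤ (V * Matrix.diagonal c * Wᵀ).rank,
      ∀ c ∈ C, c ≠ 0 →
        (Module.finrank F ↥(rowSpace V ⊓ dotPerp (rowSpace (W * Matrix.diagonal c))) : ℤ)
          ≤ (V.rank : ℤ) - d,
      ∀ c ∈ C, c ≠ 0 →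
        (Module.finrank F ↥(rowSpace W ⊓ dotPerp (rowSpace (V * Matrix.diagonal c))) : ℤ)
          ≤ (W.rank : ℤ) - d] :=
  extremal_triple_tfae_general C V W
end

section
/- Let q be a prime power and let k, d, n, m, R be positive integers with d ≤ n, m < R and n + m ≥ R + d. Let C ⊆ 𝔽_q^R be a non-zero linear code of minimum Hamming distance at least d, and let V ∈ 𝔽_q^{n×R}, W ∈ 𝔽_q^{m×R} be matrices whose row spaces are MDS codes (i.e., rank(V) = n, every non-zero vector of rowsp(V) has Hamming weight ≥ R − n + 1, rank(W) = m, and every non-zero vector of rowsp(W) has Hamming weight ≥ R − m + 1). Then rank(V · diag(c) · Wᵀ) ≥ d for every non-zero c ∈ C. -/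
open Matrix

/-!
For `c ≠ 0` with support `S` of size `w ≥ d`, only the columns indexed by `S` contribute:
`V diag(c) Wᵀ = V_S diag(c_S) W_Sᵀ` with `diag(c_S)` invertible. A non-zero codeword of an
`[R, n]` MDS code vanishes on fewer than `n` coordinates, so the rows of `V` stay independent on
any `n` coordinates; hence `rank V_S ≥ min(n, w)`, and likewise `rank W_S ≥ min(m, w)`.
Sylvester's rank inequality then gives `rank ≥ min(n, w) + min(m, w) - w`, which is at least `d`
in all four cases since `d ≤ n, m, w` and `w ≤ R ≤ n + m - d`.
-/

open Module

namespace LinearMap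

variable {F U V W : Type*} [Field F] [AddCommGroup U] [Module F U] [AddCommGroup V] [Module F V]
  [AddCommGroup W] [Module F W] [FiniteDimensional F V]

theorem finrank_range_add_finrank_range_le (f : V →ₗ[F] W) (g : U →ₗ[F] V) :
    finrank F (range f) + finrank F (range g) ≤ finrank F (range (f ∘ₗ g)) + finrank F V := by
  obtain ⟨q, hq⟩ := (range g).exists_isCompl
  have hrange : finrank F (range f) ≤ finrank F (range (f ∘ₗ g)) + finrank F q :=
    calc finrank F (range f)
        = finrank F ((range g).map f ⊔ q.map f : Submodule F W) := by
          rw [← Submodule.map_sup, hq.sup_eq_top, Submodule.map_top]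
      _ ≤ finrank F ((range g).map f) + finrank F (q.map f) :=
          Submodule.finrank_add_le_finrank_add_finrank _ _
      _ ≤ finrank F (range (f ∘ₗ g)) + finrank F q := by
          rw [range_comp]
          gcongr
          exact Submodule.finrank_map_le f q
  have hdim := Submodule.finrank_add_eq_of_isCompl hq
  omega

end LinearMap

theorem hammingNorm_le_card_sub_card {ι β : Type*} [Fintype ι] [Zero β] [DecidableEq β]
    (v : ι → β) (T : Finset ι) (hv : ∀ k ∈ T, v k = 0) :
    hammingNorm v ≤ Fintype.card ι - T.card := by
  classical
  rw [← Finset.card_compl]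
  exact Finset.card_le_card fun k hk => Finset.mem_compl.2 fun hkT =>
    (Finset.mem_filter.1 hk).2 (hv k hkT)

namespace Matrix

variable {F : Type*} [Field F]

theorem rank_add_rank_le_rank_mul_add_card {l m o : Type*} [Fintype m] [Fintype o]
    (A : Matrix l m F) (B : Matrix m o F) :
    A.rank + B.rank ≤ (A * B).rank + Fintype.card m := by
  have := LinearMap.finrank_range_add_finrank_range_le A.mulVecLin B.mulVecLin
  rwa [← mulVecLin_mul, finrank_fintype_fun_eq_card] at this

theorem linearIndependent_row_of_rank_eq_card {ι κ : Type*} [Fintype ι] [Fintype κ]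
    {M : Matrix ι κ F} (h : M.rank = Fintype.card ι) : LinearIndependent F M.row := by
  rw [linearIndependent_iff_card_eq_finrank_span, Set.finrank, ← rank_eq_finrank_span_row, h]

theorem linearIndependent_col_of_rank_eq_card {ι κ : Type*} [Fintype ι] [Fintype κ]
    {M : Matrix ι κ F} (h : M.rank = Fintype.card κ) : LinearIndependent F M.col := by
  rw [linearIndependent_iff_card_eq_finrank_span, Set.finrank, ← rank_eq_finrank_span_cols, h]

theorem rank_add_rank_le_rank_mul_diagonal_mul_transpose_add_card {l o κ : Type*} [Fintype o]
    [Fintype κ] [DecidableEq κ] (A : Matrix l κ F) (B : Matrix o κ F) {c : κ → F}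
    (hc : ∀ k, c k ≠ 0) :
    A.rank + B.rank ≤ (A * diagonal c * Bᵀ).rank + Fintype.card κ := by
  have hdet : (diagonal c).det ≠ 0 := by
    rw [det_diagonal]
    exact Finset.prod_ne_zero_iff.2 fun k _ => hc k
  have := rank_add_rank_le_rank_mul_add_card A (diagonal c * Bᵀ)
  rwa [rank_mul_eq_right_of_det_ne_zero _ _ hdet, rank_transpose, ← Matrix.mul_assoc] at this

theorem mul_diagonal_mul_transpose_eq_submatrix {R l o κ : Type*} [Semiring R] [Fintype κ]
    [DecidableEq κ] (A : Matrix l κ R) (B : Matrix o κ R) (c : κ → R) (S : Finset κ)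
    (hc : ∀ k ∉ S, c k = 0) :
    A * diagonal c * Bᵀ = A.submatrix id ((↑) : S → κ) * diagonal (fun k : S => c k) *
      (B.submatrix id ((↑) : S → κ))ᵀ := by
  ext i j
  rw [mul_apply, mul_apply]
  simp only [mul_diagonal, transpose_apply, submatrix_apply, id_eq]
  rw [Finset.sum_coe_sort S (fun k => A i k * c k * B j k)]
  exact (Finset.sum_subset S.subset_univ fun k _ hk => by simp [hc k hk]).symm

end Matrix

section MDS

variable {F : Type*} [Field F] [DecidableEq F] {n R : ℕ} {V : Matrix (Fin n) (Fin R) F}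

theorem linearIndependent_row_submatrix_of_mds (hV : LinearIndependent F V.row)
    (hmds : ∀ v ∈ rowSpace V, v ≠ 0 → R - n + 1 ≤ hammingNorm v)
    {T : Finset (Fin R)} (hT : n ≤ T.card) :
    LinearIndependent F (V.submatrix id ((↑) : T → Fin R)).row := by
  rw [Fintype.linearIndependent_iff] at hV ⊢
  intro g hg
  apply hV g
  set v := ∑ i, g i • V.row i
  have hvT : ∀ k ∈ T, v k = 0 := fun k hk => by
    simpa [v] using congrFun hg ⟨k, hk⟩
  by_contra hv
  have hv_mem : v ∈ rowSpace V :=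
    Submodule.sum_mem _ fun i _ => Submodule.smul_mem _ _ (Submodule.subset_span ⟨i, rfl⟩)
  have hlow := hmds v hv_mem hv
  have hhigh := hammingNorm_le_card_sub_card v T hvT
  have hTR := T.card_le_univ
  simp only [Fintype.card_fin] at hhigh hTR
  omega

theorem min_le_rank_submatrix_of_mds (hV : V.rank = n)
    (hmds : ∀ v ∈ rowSpace V, v ≠ 0 → R - n + 1 ≤ hammingNorm v) (S : Finset (Fin R)) :
    min n S.card ≤ (V.submatrix id ((↑) : S → Fin R)).rank := by
  have hrow : LinearIndependent F V.row :=
    linearIndependent_row_of_rank_eq_card (by rw [hV, Fintype.card_fin])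
  rcases le_total n S.card with hnS | hSn
  · rw [(linearIndependent_row_submatrix_of_mds hrow hmds hnS).rank_matrix, Fintype.card_fin]
    exact min_le_left _ _
  · have hnR : n ≤ Fintype.card (Fin R) := by simpa [hV] using V.rank_le_width
    obtain ⟨T, hST, hT⟩ := Finset.exists_superset_card_eq hSn hnR
    have hcolT : LinearIndependent F (V.submatrix id ((↑) : T → Fin R)).col := by
      apply linearIndependent_col_of_rank_eq_card
      rw [(linearIndependent_row_submatrix_of_mds hrow hmds hT.ge).rank_matrix,
        Fintype.card_fin, Fintype.card_coe, hT]
    have hcolS : LinearIndependent F (V.submatrix id ((↑) : S → Fin R)).col :=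
      hcolT.comp _ (Set.inclusion_injective (Finset.coe_subset.2 hST))
    rw [← rank_transpose, LinearIndependent.rank_matrix hcolS, Fintype.card_coe]
    exact min_le_right _ _

end MDS

theorem extremal_triple_of_MDS_rowspaces_general {F : Type*} [Field F]
    [DecidableEq F] {n m R d : ℕ}
    (hdn : d ≤ n) (hdm : d ≤ m)
    (hsum : R + d ≤ n + m)
    (C : Submodule F (Fin R → F))
    (hCd : ∀ c ∈ C, c ≠ 0 → d ≤ hammingNorm c)
    (V : Matrix (Fin n) (Fin R) F) (W : Matrix (Fin m) (Fin R) F)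
    (hVrank : V.rank = n)
    (hVmds : ∀ v ∈ rowSpace V, v ≠ 0 → R - n + 1 ≤ hammingNorm v)
    (hWrank : W.rank = m)
    (hWmds : ∀ w ∈ rowSpace W, w ≠ 0 → R - m + 1 ≤ hammingNorm w) :
    ∀ c ∈ C, c ≠ 0 → d ≤ (V * Matrix.diagonal c * Wᵀ).rank := by
  intro c hcC hc0
  set S : Finset (Fin R) := {k | c k ≠ 0}
  have hdS : d ≤ S.card := hCd c hcC hc0
  have hSR : S.card ≤ R := by simpa using S.card_le_univ
  rw [mul_diagonal_mul_transpose_eq_submatrix V W c S (by simp [S])]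
  have hsyl := rank_add_rank_le_rank_mul_diagonal_mul_transpose_add_card
    (V.submatrix id ((↑) : S → Fin R)) (W.submatrix id ((↑) : S → Fin R))
    (c := fun k : S => c k) fun k => (Finset.mem_filter.1 k.2).2
  have hV := min_le_rank_submatrix_of_mds hVrank hVmds S
  have hW := min_le_rank_submatrix_of_mds hWrank hWmds S
  rw [Fintype.card_coe] at hsyl
  omega

/-- If `d ≤ n, m < R`, `n + m ≥ R + d`, the row spaces of `V` and `W` are MDS codes, and
`C` is a non-zero code of minimum Hamming distance at least `d`, then
`rank(V diag(c) Wᵀ) ≥ d` for every non-zero `c ∈ C`, i.e. `(C, V, W)` is an extremal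
triple. -/
theorem extremal_triple_of_MDS_rowspaces {F : Type*} [Field F] [Fintype F]
    [DecidableEq F] {n m R d : ℕ}
    (hd : 0 < d) (hdn : d ≤ n) (hdm : d ≤ m) (hnR : n < R) (hmR : m < R)
    (hsum : R + d ≤ n + m)
    (C : Submodule F (Fin R → F)) (hC : C ≠ ⊥)
    (hCd : ∀ c ∈ C, c ≠ 0 → d ≤ hammingNorm c)
    (V : Matrix (Fin n) (Fin R) F) (W : Matrix (Fin m) (Fin R) F)
    (hVrank : V.rank = n)
    (hVmds : ∀ v ∈ rowSpace V, v ≠ 0 → R - n + 1 ≤ hammingNorm v)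
    (hWrank : W.rank = m)
    (hWmds : ∀ w ∈ rowSpace W, w ≠ 0 → R - m + 1 ≤ hammingNorm w) :
    ∀ c ∈ C, c ≠ 0 → d ≤ (V * Matrix.diagonal c * Wᵀ).rank :=
  extremal_triple_of_MDS_rowspaces_general hdn hdm hsum C hCd V W hVrank hVmds hWrank hWmds
end

section
/- Let q be a prime power and let C ⊆ 𝔽_q^{n×m} be a rank-metric code of dimension k ≥ 2, minimum distance at least d, and tensor rank R. Then there exists a subcode D ⊂ C with dim(D) = k − 1, minimum distance of D at least d, and trk(D) ≤ R − 1. -/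
/-!
Take a minimal family `A₀, …, A_{R-1}` of rank-one matrices whose span contains `C`, and let `W`
be the span of `A₁, …, A_{R-1}`. Minimality forces `C ⊄ W`, while `C ⊆ ⟨A₀⟩ + W`; hence
`D = C ∩ W` has codimension one in `C`. As a subcode it keeps the minimum distance, and it lies in
the span of the `R - 1` matrices spanning `W`.
-/

open Matrix

noncomputable def trkCode {F : Type*} [Field F] {n m : ℕ}
    (C : Submodule F (Matrix (Fin n) (Fin m) F)) : ℕ :=
  sInf {R : ℕ | ∃ A : Fin R → Matrix (Fin n) (Fin m) F,
    (∀ r, (A r).rank = 1) ∧ C ≤ Submodule.span F (Set.range A)}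

open Module Submodule

theorem Matrix.eq_zero_of_rank_eq_zero {K m n : Type*} [Field K] [Fintype n]
    {A : Matrix m n K} (hA : A.rank = 0) : A = 0 := by
  classical
  rw [Matrix.rank, Submodule.finrank_eq_zero, LinearMap.range_eq_bot] at hA
  ext i j
  simpa using congr_fun (LinearMap.congr_fun hA (Pi.single j 1)) i

theorem Matrix.rank_single_one {K m n : Type*} [Field K] [Fintype n] [DecidableEq m]
    [DecidableEq n] (i : m) (j : n) : (single i j (1 : K)).rank = 1 := by
  refine le_antisymm ?_ (Nat.one_le_iff_ne_zero.2 fun h => ?_)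
  · rw [single_eq_single_vecMulVec_single]
    exact rank_vecMulVec_le _ _
  · simpa using congr_fun₂ (eq_zero_of_rank_eq_zero h) i j

theorem Submodule.finrank_inf_eq_finrank_sub_one {K V : Type*} [DivisionRing K]
    [AddCommGroup V] [Module K V] [FiniteDimensional K V] {C W : Submodule K V} {v : V}
    (hC : C ≤ K ∙ v ⊔ W) (hCW : ¬ C ≤ W) :
    finrank K ↥(C ⊓ W) = finrank K C - 1 := by
  have hlt : finrank K ↥(C ⊓ W) < finrank K C :=
    finrank_lt_finrank_of_lt (inf_lt_left.2 hCW)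
  have hsup : finrank K ↥(C ⊔ W) ≤ 1 + finrank K W :=
    calc finrank K ↥(C ⊔ W) ≤ finrank K ↥(K ∙ v ⊔ W) := finrank_mono (sup_le hC le_sup_right)
      _ ≤ finrank K (K ∙ v) + finrank K W := finrank_add_le_finrank_add_finrank _ _
      _ ≤ 1 + finrank K W := by
        gcongr
        simpa using finrank_span_le_card ({v} : Set V)
  have := finrank_sup_add_finrank_inf_eq C W
  omega

section TensorRank

variable {F : Type*} [Field F] {n m : ℕ} {C : Submodule F (Matrix (Fin n) (Fin m) F)}

theorem trkCode_le {R : ℕ} {A : Fin R → Matrix (Fin n) (Fin m) F} (hA : ∀ r, (A r).rank = 1)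
    (hC : C ≤ span F (Set.range A)) : trkCode C ≤ R :=
  Nat.sInf_le ⟨A, hA, hC⟩

theorem exists_rank_one_family_trkCode (C : Submodule F (Matrix (Fin n) (Fin m) F)) :
    ∃ A : Fin (trkCode C) → Matrix (Fin n) (Fin m) F,
      (∀ r, (A r).rank = 1) ∧ C ≤ span F (Set.range A) := by
  classical
  suffices h : trkCode C ∈ {R : ℕ | ∃ A : Fin R → Matrix (Fin n) (Fin m) F,
      (∀ r, (A r).rank = 1) ∧ C ≤ span F (Set.range A)} from h
  refine Nat.sInf_mem ⟨n * m, (fun p => single p.1 p.2 1) ∘ finProdFinEquiv.symm,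
    fun r => rank_single_one _ _, ?_⟩
  have hbasis : ⇑(Matrix.stdBasis F (Fin n) (Fin m)) = fun p => single p.1 p.2 1 :=
    funext fun p => stdBasis_eq_single F p.1 p.2
  rw [finProdFinEquiv.symm.surjective.range_comp, ← hbasis, Basis.span_eq]
  exact le_top

theorem trkCode_pos (hC : C ≠ ⊥) : 0 < trkCode C := by
  obtain ⟨A, -, hCA⟩ := exists_rank_one_family_trkCode C
  refine Nat.pos_of_ne_zero fun h => hC (le_bot_iff.1 ?_)
  rwa [Set.range_eq_empty_iff.2 (h ▸ inferInstance), span_empty] at hCA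

theorem exists_le_span_singleton_sup_trkCode_sub_one (hC : C ≠ ⊥) :
    ∃ (v : Matrix (Fin n) (Fin m) F) (B : Fin (trkCode C - 1) → Matrix (Fin n) (Fin m) F),
      (∀ r, (B r).rank = 1) ∧ C ≤ F ∙ v ⊔ span F (Set.range B) := by
  obtain ⟨A, hA, hCA⟩ := exists_rank_one_family_trkCode C
  have hpos := trkCode_pos hC
  generalize trkCode C = R at A hA hCA hpos ⊢
  obtain ⟨r, rfl⟩ := Nat.exists_eq_add_of_lt hpos
  refine ⟨A 0, Fin.tail A, fun i => hA _, ?_⟩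
  rwa [← Fin.cons_self_tail A, Fin.range_cons, span_insert] at hCA

end TensorRank

theorem exists_subcode_smaller_trk_general {F : Type*} [Field F] {n m d R : ℕ}
    (C : Submodule F (Matrix (Fin n) (Fin m) F))
    (hk : 2 ≤ Module.finrank F C)
    (hd : ∀ M ∈ C, M ≠ 0 → d ≤ M.rank)
    (hR : trkCode C = R) :
    ∃ D : Submodule F (Matrix (Fin n) (Fin m) F), D < C ∧
      Module.finrank F D = Module.finrank F C - 1 ∧
      (∀ M ∈ D, M ≠ 0 → d ≤ M.rank) ∧
      trkCode D ≤ R - 1 := by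
  subst hR
  have hC : C ≠ ⊥ := by
    rintro rfl
    simp at hk
  obtain ⟨v, B, hB, hCB⟩ := exists_le_span_singleton_sup_trkCode_sub_one hC
  have hCW : ¬ C ≤ span F (Set.range B) := fun h => by
    have := trkCode_le hB h
    have := trkCode_pos hC
    omega
  exact ⟨C ⊓ span F (Set.range B), inf_lt_left.2 hCW, finrank_inf_eq_finrank_sub_one hCB hCW,
    fun M hM => hd M hM.1, trkCode_le hB inf_le_right⟩

/-- A rank-metric code of dimension `k ≥ 2`, minimum distance at least `d` and tensor
rank `R` has a subcode of dimension `k - 1`, minimum distance at least `d` and tensor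
rank at most `R - 1`. -/
theorem exists_subcode_smaller_trk {F : Type*} [Field F] [Fintype F] {n m d R : ℕ}
    (C : Submodule F (Matrix (Fin n) (Fin m) F))
    (hk : 2 ≤ Module.finrank F C)
    (hd : ∀ M ∈ C, M ≠ 0 → d ≤ M.rank)
    (hR : trkCode C = R) :
    ∃ D : Submodule F (Matrix (Fin n) (Fin m) F), D < C ∧
      Module.finrank F D = Module.finrank F C - 1 ∧
      (∀ M ∈ D, M ≠ 0 → d ≤ M.rank) ∧
      trkCode D ≤ R - 1 :=
  exists_subcode_smaller_trk_general C hk hd hR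
end

section
/- Let q be a prime power, let C ⊆ 𝔽_q^{n×m} be a rank-metric code of dimension k, and let d be an integer with 2 ≤ d ≤ min{n, m}. The following are equivalent: (1) every non-zero M ∈ C has rank(M) ≥ d; (2) for every invertible A ∈ GL(n, 𝔽_q) and every subset I ⊆ {1, …, n} with |I| ≤ d − 1, the row-punctured code Π^r(C, A, I) := {(AM)_{Ī} : M ∈ C} ⊆ 𝔽_q^{(n−|I|)×m} has dimension k; (3) for every invertible B ∈ GL(m, 𝔽_q) and every subset J ⊆ {1, …, m} with |J| ≤ d − 1, the column-punctured code Π^c(C, B, J) := {(MB)^{J̄} : M ∈ C} ⊆ 𝔽_q^{n×(m−|J|)} has dimension k. -/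
/-!
`rowPunct A I M = 0` says exactly that the rows of `A` outside `I` lie in the left kernel of `M`,
which has dimension `n - rank M`. Since the rows of an invertible `A` are linearly independent,
this forces `rank M ≤ |I|`; conversely, taking as rows of `A` a basis of `F^n` that extends a basis
of the left kernel achieves `|I| = rank M`. So the words of rank `≤ r` are exactly the words killed
by some row puncturing with `|I| ≤ r`, and a puncturing preserves `dim C` iff it is injective on
`C`. Columns reduce to rows by transposition.
-/

open Matrix

/-- Row puncturing: `M ↦ (A M)_{Ī}`, keeping only the rows of `A M` outside `I`,
as a linear map. -/
def rowPunct {F : Type*} [Field F] {n m : ℕ} (A : Matrix (Fin n) (Fin n) F)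
    (I : Finset (Fin n)) :
    Matrix (Fin n) (Fin m) F →ₗ[F] Matrix {j : Fin n // j ∉ I} (Fin m) F where
  toFun M := Matrix.of fun j l => (A * M) j.1 l
  map_add' M N := by
    ext j l
    simp [Matrix.mul_add]
  map_smul' c M := by
    ext j l
    simp [Matrix.mul_smul]

/-- Column puncturing: `M ↦ (M B)^{J̄}`, keeping only the columns of `M B` outside `J`,
as a linear map. -/
def colPunct {F : Type*} [Field F] {n m : ℕ} (B : Matrix (Fin m) (Fin m) F)
    (J : Finset (Fin m)) :
    Matrix (Fin n) (Fin m) F →ₗ[F] Matrix (Fin n) {l : Fin m // l ∉ J} F where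
  toFun M := Matrix.of fun i l => (M * B) i l.1
  map_add' M N := by
    ext i l
    simp [Matrix.add_mul]
  map_smul' c M := by
    ext i l
    simp [Matrix.smul_mul]

open Module Submodule

section

variable {F V : Type*} [Field F] [AddCommGroup V] [Module F V]

theorem finrank_map_eq_iff_forall_eq_zero {W : Type*} [AddCommGroup W] [Module F W]
    (f : V →ₗ[F] W) (C : Submodule F V) [FiniteDimensional F C] :
    finrank F (C.map f) = finrank F C ↔ ∀ x ∈ C, f x = 0 → x = 0 := by
  simp_rw [← LinearMap.mem_ker, ← disjoint_def]
  refine ⟨fun h ↦ disjoint_ker_of_finrank_le f h.ge, fun h ↦ ?_⟩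
  rw [← LinearMap.range_domRestrict]
  exact LinearMap.finrank_range_of_inj (LinearMap.injective_domRestrict_iff.mpr h)

theorem Module.Basis.sumExtend_inl {ι : Type*} {v : ι → V} (hv : LinearIndependent F v) (i : ι) :
    sumExtend hv (Sum.inl i) = v i := by
  rw [sumExtend, reindex_apply, coe_extend]
  rfl

theorem Submodule.exists_finBasis_extending [FiniteDimensional F V] (K : Submodule F V) {n : ℕ}
    (hn : finrank F V = n) :
    ∃ (b : Basis (Fin n) F V) (S : Finset (Fin n)), S.card = finrank F K ∧ ∀ i ∈ S, b i ∈ K := by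
  have hv := (finBasis F K).linearIndependent.map' K.subtype K.ker_subtype
  let e := (Basis.sumExtend hv).indexEquiv (finBasisOfFinrankEq F V hn)
  refine ⟨(Basis.sumExtend hv).reindex e,
    Finset.univ.map (Function.Embedding.inl.trans e.toEmbedding), by simp, ?_⟩
  simp only [Finset.mem_map, Finset.mem_univ, true_and, forall_exists_index]
  rintro _ a rfl
  rw [Basis.reindex_apply, Function.Embedding.trans_apply, Equiv.coe_toEmbedding,
    e.symm_apply_apply, Function.Embedding.inl_apply, Basis.sumExtend_inl]
  exact (finBasis F K a).2

end

namespace Matrix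

variable {F : Type*} [Field F]

theorem rank_add_finrank_ker_vecMulLinear {m n : Type*} [Fintype m] [Fintype n]
    (M : Matrix m n F) : M.rank + finrank F (LinearMap.ker M.vecMulLinear) = Fintype.card m := by
  rw [rank_eq_finrank_span_row, ← range_vecMulLinear, LinearMap.finrank_range_add_finrank_ker,
    finrank_fintype_fun_eq_card]

end Matrix

section PuncturedCode

open Matrix

variable {F : Type*} [Field F] {n m : ℕ}

theorem rowPunct_eq_zero_iff (A : Matrix (Fin n) (Fin n) F) (I : Finset (Fin n))
    (M : Matrix (Fin n) (Fin m) F) :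
    rowPunct A I M = 0 ↔ ∀ j ∉ I, A j ∈ LinearMap.ker M.vecMulLinear := by
  simp only [LinearMap.mem_ker, vecMulLinear_apply, ← mul_apply_eq_vecMul]
  constructor
  · intro h j hj
    ext l
    exact congrFun₂ h ⟨j, hj⟩ l
  · intro h
    ext ⟨j, hj⟩ l
    exact congrFun (h j hj) l

theorem colPunct_eq_transpose_rowPunct (B : Matrix (Fin m) (Fin m) F) (J : Finset (Fin m))
    (M : Matrix (Fin n) (Fin m) F) :
    colPunct B J M = (rowPunct Bᵀ J Mᵀ)ᵀ := by
  ext i l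
  simp [rowPunct, colPunct, ← transpose_mul]

theorem rank_le_card_of_rowPunct_eq_zero {A : Matrix (Fin n) (Fin n) F} (hA : IsUnit A)
    {I : Finset (Fin n)} {M : Matrix (Fin n) (Fin m) F} (h : rowPunct A I M = 0) :
    M.rank ≤ I.card := by
  have hrank := rank_add_finrank_ker_vecMulLinear M
  have hrows : LinearIndependent F fun j : {j // j ∉ I} ↦ A j :=
    (linearIndependent_rows_iff_isUnit.mpr hA).comp Subtype.val Subtype.val_injective
  have hker : span F (Set.range fun j : {j // j ∉ I} ↦ A j) ≤ LinearMap.ker M.vecMulLinear :=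
    span_le.mpr <| Set.range_subset_iff.mpr fun j ↦ (rowPunct_eq_zero_iff A I M).mp h j j.2
  have hcard := (finrank_span_eq_card hrows).symm.trans_le (finrank_mono hker)
  simp only [Fintype.card_subtype_compl, Fintype.card_coe, Fintype.card_fin] at hrank hcard
  omega

theorem exists_isUnit_rowPunct_eq_zero (M : Matrix (Fin n) (Fin m) F) :
    ∃ (A : Matrix (Fin n) (Fin n) F) (I : Finset (Fin n)),
      IsUnit A ∧ I.card = M.rank ∧ rowPunct A I M = 0 := by
  obtain ⟨b, S, hS, hSK⟩ :=
    (LinearMap.ker M.vecMulLinear).exists_finBasis_extending (finrank_fin_fun F)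
  refine ⟨of fun i ↦ b i, Sᶜ, linearIndependent_rows_iff_isUnit.mp b.linearIndependent, ?_,
    (rowPunct_eq_zero_iff _ _ M).mpr fun j hj ↦ hSK j (Finset.notMem_compl.mp hj)⟩
  have hrank := rank_add_finrank_ker_vecMulLinear M
  rw [Fintype.card_fin] at hrank
  rw [Finset.card_compl, Fintype.card_fin, hS]
  omega

theorem exists_isUnit_rowPunct_eq_zero_iff (M : Matrix (Fin n) (Fin m) F) (r : ℕ) :
    (∃ (A : Matrix (Fin n) (Fin n) F) (I : Finset (Fin n)),
      IsUnit A ∧ I.card ≤ r ∧ rowPunct A I M = 0) ↔ M.rank ≤ r := by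
  refine ⟨fun ⟨A, I, hA, hI, h⟩ ↦ (rank_le_card_of_rowPunct_eq_zero hA h).trans hI, fun hr ↦ ?_⟩
  obtain ⟨A, I, hA, hI, h⟩ := exists_isUnit_rowPunct_eq_zero M
  exact ⟨A, I, hA, hI ▸ hr, h⟩

theorem exists_isUnit_colPunct_eq_zero_iff (M : Matrix (Fin n) (Fin m) F) (r : ℕ) :
    (∃ (B : Matrix (Fin m) (Fin m) F) (J : Finset (Fin m)),
      IsUnit B ∧ J.card ≤ r ∧ colPunct B J M = 0) ↔ M.rank ≤ r := by
  rw [← rank_transpose, ← exists_isUnit_rowPunct_eq_zero_iff]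
  simp only [colPunct_eq_transpose_rowPunct, transpose_eq_zero]
  constructor <;> rintro ⟨B, J, hB, hJ, h⟩
  · exact ⟨Bᵀ, J, (isUnit_transpose B).mpr hB, hJ, h⟩
  · exact ⟨Bᵀ, J, (isUnit_transpose B).mpr hB, hJ, by rwa [transpose_transpose]⟩

variable (C : Submodule F (Matrix (Fin n) (Fin m) F))

theorem forall_finrank_map_rowPunct_eq_iff (r : ℕ) :
    (∀ A : Matrix (Fin n) (Fin n) F, IsUnit A → ∀ I : Finset (Fin n), I.card ≤ r →
      finrank F (C.map (rowPunct A I)) = finrank F C) ↔ ∀ M ∈ C, M ≠ 0 → r < M.rank := by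
  simp only [finrank_map_eq_iff_forall_eq_zero, ← not_le, ← exists_isUnit_rowPunct_eq_zero_iff]
  constructor
  · rintro h M hM hM0 ⟨A, I, hA, hI, hMI⟩
    exact hM0 (h A hA I hI M hM hMI)
  · intro h A hA I hI M hM hMI
    by_contra hM0
    exact h M hM hM0 ⟨A, I, hA, hI, hMI⟩

theorem forall_finrank_map_colPunct_eq_iff (r : ℕ) :
    (∀ B : Matrix (Fin m) (Fin m) F, IsUnit B → ∀ J : Finset (Fin m), J.card ≤ r →
      finrank F (C.map (colPunct B J)) = finrank F C) ↔ ∀ M ∈ C, M ≠ 0 → r < M.rank := by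
  simp only [finrank_map_eq_iff_forall_eq_zero, ← not_le, ← exists_isUnit_colPunct_eq_zero_iff]
  constructor
  · rintro h M hM hM0 ⟨B, J, hB, hJ, hMJ⟩
    exact hM0 (h B hB J hJ M hM hMJ)
  · intro h B hB J hJ M hM hMJ
    by_contra hM0
    exact h M hM hM0 ⟨B, J, hB, hJ, hMJ⟩

end PuncturedCode

theorem minDist_iff_punctured_dims_general {F : Type*} [Field F] {n m k d : ℕ}
    (C : Submodule F (Matrix (Fin n) (Fin m) F)) (hk : Module.finrank F C = k)
    (hd2 : 2 ≤ d) :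
    List.TFAE [
      ∀ M ∈ C, M ≠ 0 → d ≤ M.rank,
      ∀ (A : Matrix (Fin n) (Fin n) F), IsUnit A → ∀ I : Finset (Fin n),
        I.card ≤ d - 1 → Module.finrank F (C.map (rowPunct A I)) = k,
      ∀ (B : Matrix (Fin m) (Fin m) F), IsUnit B → ∀ J : Finset (Fin m),
        J.card ≤ d - 1 → Module.finrank F (C.map (colPunct B J)) = k] := by
  subst hk
  have hd : ∀ M : Matrix (Fin n) (Fin m) F, d - 1 < M.rank ↔ d ≤ M.rank := fun _ ↦ by omega
  tfae_have 1 ↔ 2 := by simp only [forall_finrank_map_rowPunct_eq_iff, hd]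
  tfae_have 1 ↔ 3 := by simp only [forall_finrank_map_colPunct_eq_iff, hd]
  tfae_finish

/-- A rank-metric code `C ⊆ 𝔽_q^{n×m}` of dimension `k` has minimum distance `≥ d` iff
every row-punctured code `Π^r(C, A, I)` with `A` invertible and `|I| ≤ d - 1` has
dimension `k`, iff every column-punctured code `Π^c(C, B, J)` with `B` invertible and
`|J| ≤ d - 1` has dimension `k`. -/
theorem minDist_iff_punctured_dims {F : Type*} [Field F] [Fintype F] {n m k d : ℕ}
    (C : Submodule F (Matrix (Fin n) (Fin m) F)) (hk : Module.finrank F C = k)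
    (hd2 : 2 ≤ d) (hdn : d ≤ n) (hdm : d ≤ m) :
    List.TFAE [
      ∀ M ∈ C, M ≠ 0 → d ≤ M.rank,
      ∀ (A : Matrix (Fin n) (Fin n) F), IsUnit A → ∀ I : Finset (Fin n),
        I.card ≤ d - 1 → Module.finrank F (C.map (rowPunct A I)) = k,
      ∀ (B : Matrix (Fin m) (Fin m) F), IsUnit B → ∀ J : Finset (Fin m),
        J.card ≤ d - 1 → Module.finrank F (C.map (colPunct B J)) = k] :=
  minDist_iff_punctured_dims_general C hk hd2
end
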